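/- arXiv:2605.28638 — 3 statements merged into one kernel-verified Lean document; each statement's English description precedes it below -/
import Mathlib

section
/- Let N ≥ 3, 0 < s < 1, 2 ≤ p < N/s, 0 < γ < 1, and let a satisfy (H_a). Fix n ∈ ℕ and define J_n(u) := (1/p)[u]_{s,p}^p − ∫_{ℝ^N} A(x, u(x)) dx on D^{s,p}(ℝ^N), where A(x,t) := ∫_0^t a(x)(τ_+ + 1/n)^{−γ} dτ. Then J_n is coercive: there exist constants c > 0 and C ≥ 0 (independent of u) such that J_n(u) ≥ c [u]_{s,p}^p − C for all u ∈ D^{s,p}(ℝ^N); in particular J_n(u) → +∞ as [u]_{s,p} → ∞. -/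
/-!
Since `(τ₊ + 1/n)^{-γ} ≤ n^γ`, the primitive satisfies `|A(x, t)| ≤ n^γ a(x) |t|`, and Hölder's
inequality with `a ≤ c_a w ∈ L^{(p*)'}` bounds the nonlinear term by `K ‖u‖_{p*}`. The fractional
Sobolev inequality `κ ‖u‖_{p*}^p ≤ [u]_{s,p}^p` turns this into `K κ^{-1/p} [u]_{s,p}`, which
Young's inequality absorbs: `K κ^{-1/p} [u]_{s,p} ≤ [u]_{s,p}^p / (2p) + C`. Hence
`J_n(u) ≥ [u]_{s,p}^p / (2p) - C`.

The Sobolev inequality is proved by hand. Let `M = ‖u‖_{p*}^{p*}` and `|u(x)| = 2S > 0`. By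
Chebyshev, `|{|u| > S}| ≤ m := M / S^{p*}`; choosing `ρ` with `|B_ρ| = m`, at least `(2^N - 2) m` of
the annulus `ρ ≤ |x - y| < 2ρ` lies in `{|u| ≤ S}`, where `|u(x) - u(y)| ≥ S`. This bounds the inner
Gagliardo integral at `x` below by `κ M^{-sp/N} |u(x)|^{p*}`, and integrating in `x` gives
`κ M^{p/p*} ≤ [u]_{s,p}^p`.
-/

open MeasureTheory Metric

noncomputable section

/-- Euclidean space `ℝ^N`. -/
abbrev RN (N : ℕ) := EuclideanSpace ℝ (Fin N)

/-- The `p`-th power of the Gagliardo seminorm `[u]_{s,p}^p`. -/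
def gagliardoP (N : ℕ) (s p : ℝ) (u : RN N → ℝ) : ℝ :=
  ∫ z : RN N × RN N, |u z.1 - u z.2| ^ p / ‖z.1 - z.2‖ ^ ((N : ℝ) + s * p)

/-- The Gagliardo seminorm `[u]_{s,p}`. -/
def gagliardoSemi (N : ℕ) (s p : ℝ) (u : RN N → ℝ) : ℝ :=
  (gagliardoP N s p u) ^ (1 / p)

/-- The critical exponent `p* = Np/(N - sp)`. -/
def pStar (N : ℕ) (s p : ℝ) : ℝ := (N : ℝ) * p / ((N : ℝ) - s * p)

/-- Membership in the homogeneous fractional Sobolev space `D^{s,p}(ℝ^N)`. -/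
def DspMem (N : ℕ) (s p : ℝ) (u : RN N → ℝ) : Prop :=
  MemLp u (ENNReal.ofReal (pStar N s p)) volume ∧
  Integrable (fun z : RN N × RN N =>
    |u z.1 - u z.2| ^ p / ‖z.1 - z.2‖ ^ ((N : ℝ) + s * p)) volume

/-- The weak pairing `⟨(−Δ_p)^s u, v⟩`. -/
def fracPair (N : ℕ) (s p : ℝ) (u v : RN N → ℝ) : ℝ :=
  ∫ z : RN N × RN N,
    |u z.1 - u z.2| ^ (p - 2) * (u z.1 - u z.2) * (v z.1 - v z.2) /
      ‖z.1 - z.2‖ ^ ((N : ℝ) + s * p)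

/-- The weight `w(x) = 1/(1+|x|^{N+α})`. -/
def weightW (N : ℕ) (α : ℝ) (x : RN N) : ℝ := 1 / (1 + ‖x‖ ^ ((N : ℝ) + α))

theorem exists_mul_rpow_one_div_le {B p ε : ℝ} (hB : 0 ≤ B) (hp : 1 < p) (hε : 0 < ε) :
    ∃ C : ℝ, 0 ≤ C ∧ ∀ x : ℝ, 0 ≤ x → B * x ^ (1 / p) ≤ ε * x + C := by
  have hpq : p.HolderConjugate p.conjExponent := .conjExponent hp
  have hp0 : 0 < p := by linarith
  set k : ℝ := (ε * p) ^ (1 / p)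
  have hk : 0 < k := by positivity
  refine ⟨(B / k) ^ p.conjExponent / p.conjExponent,
    div_nonneg (by positivity) hpq.symm.nonneg, fun x hx => ?_⟩
  have hpow : (k * x ^ (1 / p)) ^ p = ε * p * x := by
    rw [Real.mul_rpow hk.le (by positivity), ← Real.rpow_mul (by positivity),
      ← Real.rpow_mul hx, one_div_mul_cancel hp0.ne', Real.rpow_one, Real.rpow_one]
  calc B * x ^ (1 / p) = (k * x ^ (1 / p)) * (B / k) := by field_simp
    _ ≤ (k * x ^ (1 / p)) ^ p / p + (B / k) ^ p.conjExponent / p.conjExponent :=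
      Real.young_inequality_of_nonneg (by positivity) (by positivity) hpq
    _ = ε * x + (B / k) ^ p.conjExponent / p.conjExponent := by
      rw [hpow]; field_simp

theorem lintegral_kernel_ge_of_annulus {E : Type*} [NormedAddCommGroup E] [MeasurableSpace E]
    [OpensMeasurableSpace E] (μ : Measure E) (f : E → ℝ) {x : E} {S ρ p r : ℝ} (hS : 0 ≤ S)
    (hρ : 0 < ρ) (hp : 0 ≤ p) (hr : 0 ≤ r) (hfx : 2 * S ≤ |f x|) :
    ENNReal.ofReal (S ^ p / (2 * ρ) ^ r) *
        (μ (ball x (2 * ρ) \ ball x ρ) - μ {y | S < |f y|}) ≤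
      ∫⁻ y, ENNReal.ofReal (|f x - f y| ^ p / ‖x - y‖ ^ r) ∂μ := by
  set T := (ball x (2 * ρ) \ ball x ρ) \ toMeasurable μ {y | S < |f y|}
  have hT : MeasurableSet T :=
    (measurableSet_ball.diff measurableSet_ball).diff (measurableSet_toMeasurable _ _)
  have hμT : μ (ball x (2 * ρ) \ ball x ρ) - μ {y | S < |f y|} ≤ μ T := by
    rw [← measure_toMeasurable {y | S < |f y|}]
    exact le_measure_sdiff
  have hkernel : ∀ y ∈ T, ENNReal.ofReal (S ^ p / (2 * ρ) ^ r) ≤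
      ENNReal.ofReal (|f x - f y| ^ p / ‖x - y‖ ^ r) := by
    rintro y ⟨⟨hy2, hy1⟩, hyS⟩
    have hfy : |f y| ≤ S := not_lt.mp fun h => hyS (subset_toMeasurable _ _ h)
    have hdiff : S ≤ |f x - f y| := by linarith [abs_sub_abs_le_abs_sub (f x) (f y)]
    have hρy : ρ ≤ ‖x - y‖ := by
      rw [← dist_eq_norm, dist_comm]; exact not_lt.mp hy1
    have hy2ρ : ‖x - y‖ ≤ 2 * ρ := by
      rw [← dist_eq_norm, dist_comm]; exact (mem_ball.mp hy2).le
    gcongr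
    · exact Real.rpow_pos_of_pos (hρ.trans_le hρy) _
  calc ENNReal.ofReal (S ^ p / (2 * ρ) ^ r) *
        (μ (ball x (2 * ρ) \ ball x ρ) - μ {y | S < |f y|})
      ≤ ∫⁻ _ in T, ENNReal.ofReal (S ^ p / (2 * ρ) ^ r) ∂μ := by
        rw [setLIntegral_const]; gcongr
    _ ≤ ∫⁻ y in T, ENNReal.ofReal (|f x - f y| ^ p / ‖x - y‖ ^ r) ∂μ :=
        setLIntegral_mono' hT hkernel
    _ ≤ _ := setLIntegral_le_lintegral _ _

theorem MeasureTheory.MemLp.integrable_abs_rpow {α : Type*} [MeasurableSpace α]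
    {μ : Measure α} {u : α → ℝ} {q : ℝ} (hq : 0 < q) (hu : MemLp u (ENNReal.ofReal q) μ) :
    Integrable (fun y => |u y| ^ q) μ := by
  simpa [Real.norm_eq_abs, ENNReal.toReal_ofReal hq.le] using
    hu.integrable_norm_rpow (by positivity) ENNReal.ofReal_ne_top

theorem meas_lt_abs_le_integral_rpow_div {α : Type*} [MeasurableSpace α] {μ : Measure α}
    {u : α → ℝ} {q S : ℝ} (hq : 0 < q) (hS : 0 < S) (hu : MemLp u (ENNReal.ofReal q) μ) :
    μ {y | S < |u y|} ≤ ENNReal.ofReal ((∫ y, |u y| ^ q ∂μ) / S ^ q) := by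
  have hSq : 0 < S ^ q := by positivity
  calc μ {y | S < |u y|} ≤ μ {y | ENNReal.ofReal (S ^ q) ≤ ENNReal.ofReal (|u y| ^ q)} :=
        measure_mono fun y hy => ENNReal.ofReal_le_ofReal (by gcongr; exact le_of_lt hy)
    _ ≤ (∫⁻ y, ENNReal.ofReal (|u y| ^ q) ∂μ) / ENNReal.ofReal (S ^ q) :=
        meas_ge_le_lintegral_div
          (hu.aestronglyMeasurable.norm.aemeasurable.pow_const q).ennreal_ofReal
          (by positivity) ENNReal.ofReal_ne_top
    _ = _ := by
        rw [← ofReal_integral_eq_lintegral_ofReal (hu.integrable_abs_rpow hq)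
          (ae_of_all _ fun _ => by positivity), ENNReal.ofReal_div_of_pos hSq]

theorem volume_ball_two_mul_diff_ball {N : ℕ} (hN : 1 ≤ N) (x : RN N) {ρ : ℝ} (hρ : 0 ≤ ρ) :
    volume (ball x (2 * ρ) \ ball x ρ) =
      ENNReal.ofReal ((2 ^ N - 1) * (ρ ^ N * volume.real (ball (0 : RN N) 1))) := by
  have : Nontrivial (RN N) := by
    have : Nonempty (Fin N) := ⟨⟨0, hN⟩⟩
    infer_instance
  have hball : ∀ r, 0 ≤ r → volume (ball x r) =
      ENNReal.ofReal (r ^ N * volume.real (ball (0 : RN N) 1)) := fun r hr => by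
    rw [Measure.addHaar_ball volume x hr, finrank_euclideanSpace_fin,
      ENNReal.ofReal_mul (by positivity), ofReal_measureReal measure_ball_lt_top.ne]
  rw [measure_sdiff (ball_subset_ball (by linarith)) measurableSet_ball.nullMeasurableSet
      measure_ball_lt_top.ne, hball _ (by positivity), hball _ hρ,
    ← ENNReal.ofReal_sub _ (by positivity)]
  ring_nf

theorem annulus_bound_eq {d σ q p ω M S : ℝ} (hd : 0 < d) (hω : 0 < ω) (hM : 0 < M) (hS : 0 < S)
    (hqσ : q * σ / d = q - p) :
    S ^ p / (2 * ((M / S ^ q) / ω) ^ d⁻¹) ^ (d + σ) * (M / S ^ q) =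
      2 ^ (-(d + σ)) * ω ^ ((d + σ) / d) * M ^ (-(σ / d)) * S ^ q := by
  have hSq : 0 < S ^ q := by positivity
  have hm : 0 < M / S ^ q := by positivity
  have hρ : 0 < (M / S ^ q / ω) ^ d⁻¹ := by positivity
  rw [← Real.exp_log (by positivity : 0 < S ^ p / (2 * ((M / S ^ q) / ω) ^ d⁻¹) ^ (d + σ) *
      (M / S ^ q)), ← Real.exp_log (by positivity :
      0 < 2 ^ (-(d + σ)) * ω ^ ((d + σ) / d) * M ^ (-(σ / d)) * S ^ q)]
  congr 1
  rw [Real.log_mul (by positivity) hm.ne', Real.log_div (by positivity) (by positivity),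
    Real.log_rpow hS, Real.log_rpow (by positivity), Real.log_mul two_ne_zero hρ.ne',
    Real.log_rpow (by positivity), Real.log_div hm.ne' hω.ne', Real.log_div hM.ne' hSq.ne',
    Real.log_rpow hS, Real.log_mul (by positivity) hSq.ne', Real.log_mul (by positivity)
      (by positivity), Real.log_mul (by positivity) (by positivity), Real.log_rpow two_pos,
    Real.log_rpow hω, Real.log_rpow hM, Real.log_rpow hS]
  have hqσ' : q * σ = (q - p) * d := by field_simp at hqσ; linarith
  field_simp
  linear_combination Real.log S * hqσ'

theorem pStar_mul_sub (N : ℕ) {s p : ℝ} (hsp : s * p < N) :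
    pStar N s p * ((N : ℝ) - s * p) = N * p := by
  rw [pStar, div_mul_cancel₀ _ (sub_pos.mpr hsp).ne']

theorem pStar_pos {N : ℕ} {s p : ℝ} (hs : 0 < s) (hp : 0 < p) (hsp : s * p < N) :
    0 < pStar N s p := by
  have : (0 : ℝ) < N := (mul_pos hs hp).trans hsp
  rw [pStar]; exact div_pos (by positivity) (sub_pos.mpr hsp)

theorem lt_pStar {N : ℕ} {s p : ℝ} (hs : 0 < s) (hp : 0 < p) (hsp : s * p < N) :
    p < pStar N s p := by
  rw [pStar, lt_div_iff₀ (sub_pos.mpr hsp)]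
  nlinarith [mul_pos hs hp]

theorem one_lt_pStar {N : ℕ} {s p : ℝ} (hs : 0 < s) (hp : 1 ≤ p) (hsp : s * p < N) :
    1 < pStar N s p :=
  hp.trans_lt (lt_pStar hs (by linarith) hsp)

theorem measureReal_ball_zero_one_pos {N : ℕ} (hN : 1 ≤ N) :
    0 < volume.real (ball (0 : RN N) 1) := by
  have : Nonempty (Fin N) := ⟨⟨0, hN⟩⟩
  exact ENNReal.toReal_pos (measure_ball_pos _ _ one_pos).ne' measure_ball_lt_top.ne

/-- The constant `κ` of the annulus argument. -/
def sobolevConst (N : ℕ) (s p : ℝ) : ℝ :=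
  (2 ^ N - 2) * (2 ^ (-((N : ℝ) + s * p)) *
    volume.real (ball (0 : RN N) 1) ^ (((N : ℝ) + s * p) / N)) * (2 ^ pStar N s p)⁻¹

theorem sobolevConst_pos {N : ℕ} (hN : 2 ≤ N) (s p : ℝ) : 0 < sobolevConst N s p := by
  have hω := measureReal_ball_zero_one_pos (N := N) (by omega)
  have h2N : (4 : ℝ) ≤ 2 ^ N := by
    calc (4 : ℝ) = 2 ^ 2 := by norm_num
      _ ≤ 2 ^ N := pow_le_pow_right₀ one_le_two hN
  have : (0 : ℝ) < 2 ^ N - 2 := by linarith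
  unfold sobolevConst; positivity

theorem ofReal_le_volume_annulus_sub_volume_lt_abs {N : ℕ} (hN : 1 ≤ N) {q S : ℝ} (hq : 0 < q)
    (hS : 0 < S) {u : RN N → ℝ} (hu : MemLp u (ENNReal.ofReal q) volume) (x : RN N) {ρ : ℝ}
    (hρ : 0 ≤ ρ) (hρN : ρ ^ N * volume.real (ball (0 : RN N) 1) = (∫ y, |u y| ^ q) / S ^ q) :
    ENNReal.ofReal ((2 ^ N - 2) * ((∫ y, |u y| ^ q) / S ^ q)) ≤
      volume (ball x (2 * ρ) \ ball x ρ) - volume {y | S < |u y|} := by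
  have hm : 0 ≤ (∫ y, |u y| ^ q) / S ^ q := by
    rw [← hρN]; have := measureReal_ball_zero_one_pos hN; positivity
  rw [volume_ball_two_mul_diff_ball hN x hρ, hρN]
  calc ENNReal.ofReal ((2 ^ N - 2) * ((∫ y, |u y| ^ q) / S ^ q))
      = ENNReal.ofReal ((2 ^ N - 1) * ((∫ y, |u y| ^ q) / S ^ q)) -
          ENNReal.ofReal ((∫ y, |u y| ^ q) / S ^ q) := by
        rw [← ENNReal.ofReal_sub _ hm]; ring_nf
    _ ≤ _ := tsub_le_tsub_left (meas_lt_abs_le_integral_rpow_div hq hS hu) _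

theorem ofReal_le_lintegral_gagliardo_kernel {N : ℕ} {s p : ℝ} (hN : 1 ≤ N) (hs : 0 < s)
    (hp : 0 < p) (hsp : s * p < N) {u : RN N → ℝ}
    (hu : MemLp u (ENNReal.ofReal (pStar N s p)) volume)
    (hM : 0 < ∫ y, |u y| ^ pStar N s p) (x : RN N) :
    ENNReal.ofReal (sobolevConst N s p * (∫ y, |u y| ^ pStar N s p) ^ (-(s * p / N)) *
        |u x| ^ pStar N s p) ≤
      ∫⁻ y, ENNReal.ofReal (|u x - u y| ^ p / ‖x - y‖ ^ ((N : ℝ) + s * p)) := by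
  set q := pStar N s p
  set M := ∫ y, |u y| ^ q
  set ω := volume.real (ball (0 : RN N) 1)
  have hN0 : (0 : ℝ) < N := by exact_mod_cast hN
  have hq : 0 < q := pStar_pos hs hp hsp
  have hω : 0 < ω := measureReal_ball_zero_one_pos hN
  rcases (abs_nonneg (u x)).eq_or_lt with hux | hux
  · rw [← hux, Real.zero_rpow hq.ne', mul_zero, ENNReal.ofReal_zero]
    exact zero_le
  set S := |u x| / 2
  have hS : 0 < S := by positivity
  set m := M / S ^ q
  set ρ := (m / ω) ^ (N : ℝ)⁻¹
  have hm : 0 < m := by positivity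
  have hρ : 0 < ρ := by positivity
  have hρN : ρ ^ N * ω = m := by
    rw [← Real.rpow_natCast, ← Real.rpow_mul (by positivity), inv_mul_cancel₀ hN0.ne',
      Real.rpow_one, div_mul_cancel₀ _ hω.ne']
  have hidentity : S ^ p / (2 * ρ) ^ ((N : ℝ) + s * p) * ((2 ^ N - 2) * m) =
      sobolevConst N s p * M ^ (-(s * p / N)) * |u x| ^ q := by
    have hqsp : q * (s * p) / N = q - p := by
      rw [div_eq_iff hN0.ne']; linear_combination -pStar_mul_sub N hsp
    have hSq : S ^ q = |u x| ^ q * (2 ^ q)⁻¹ := by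
      rw [Real.div_rpow (abs_nonneg _) zero_le_two, div_eq_mul_inv]
    calc S ^ p / (2 * ρ) ^ ((N : ℝ) + s * p) * ((2 ^ N - 2) * m)
        = (2 ^ N - 2) * (S ^ p / (2 * ρ) ^ ((N : ℝ) + s * p) * m) := by ring
      _ = _ := by
        rw [annulus_bound_eq hN0 hω hM hS hqsp, hSq, sobolevConst]; ring
  calc ENNReal.ofReal (sobolevConst N s p * M ^ (-(s * p / N)) * |u x| ^ q)
      = ENNReal.ofReal (S ^ p / (2 * ρ) ^ ((N : ℝ) + s * p)) *
          ENNReal.ofReal ((2 ^ N - 2) * m) := by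
        rw [← ENNReal.ofReal_mul (by positivity), hidentity]
    _ ≤ ENNReal.ofReal (S ^ p / (2 * ρ) ^ ((N : ℝ) + s * p)) *
          (volume (ball x (2 * ρ) \ ball x ρ) - volume {y | S < |u y|}) := by
        gcongr
        exact ofReal_le_volume_annulus_sub_volume_lt_abs hN hq hS hu x hρ.le hρN
    _ ≤ _ := lintegral_kernel_ge_of_annulus volume u hS.le hρ hp.le
          (by positivity) (mul_div_cancel₀ _ two_ne_zero).le

theorem gagliardoP_nonneg (N : ℕ) (s p : ℝ) (u : RN N → ℝ) : 0 ≤ gagliardoP N s p u :=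
  integral_nonneg fun _ => by positivity

theorem ofReal_gagliardoP_eq_lintegral {N : ℕ} {s p : ℝ} {u : RN N → ℝ}
    (hu : Integrable (fun z : RN N × RN N =>
      |u z.1 - u z.2| ^ p / ‖z.1 - z.2‖ ^ ((N : ℝ) + s * p)) volume) :
    ENNReal.ofReal (gagliardoP N s p u) =
      ∫⁻ x, ∫⁻ y, ENNReal.ofReal (|u x - u y| ^ p / ‖x - y‖ ^ ((N : ℝ) + s * p)) := by
  rw [gagliardoP, ofReal_integral_eq_lintegral_ofReal hu (ae_of_all _ fun _ => by positivity),
    Measure.volume_eq_prod, lintegral_prod _ (by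
      rw [← Measure.volume_eq_prod]; exact hu.aestronglyMeasurable.aemeasurable.ennreal_ofReal)]

theorem sobolevConst_mul_le_gagliardoP {N : ℕ} {s p : ℝ} (hN : 2 ≤ N) (hs : 0 < s)
    (hp : 0 < p) (hsp : s * p < N) {u : RN N → ℝ} (hu : DspMem N s p u) :
    sobolevConst N s p * (∫ x, |u x| ^ pStar N s p) ^ (p / pStar N s p) ≤
      gagliardoP N s p u := by
  set q := pStar N s p
  set M := ∫ x, |u x| ^ q
  have hq : 0 < q := pStar_pos hs hp hsp
  have hN0 : (0 : ℝ) < N := by exact_mod_cast (show 0 < N by omega)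
  have hG := gagliardoP_nonneg N s p u
  have hM0 : 0 ≤ M := integral_nonneg fun x => by positivity
  rcases hM0.eq_or_lt with hM | hM
  · rw [← hM, Real.zero_rpow (by positivity), mul_zero]; exact hG
  set c := sobolevConst N s p * M ^ (-(s * p / N))
  have hc : 0 ≤ c := mul_nonneg (sobolevConst_pos hN s p).le (by positivity)
  have hexp : M ^ (-(s * p / N)) * M = M ^ (p / q) := by
    rw [← Real.rpow_add_one hM.ne']
    congr 1
    field_simp
    linear_combination pStar_mul_sub N hsp
  have hlint : ENNReal.ofReal (c * M) ≤ ENNReal.ofReal (gagliardoP N s p u) :=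
    calc ENNReal.ofReal (c * M) = ∫⁻ x, ENNReal.ofReal (c * |u x| ^ q) := by
          rw [← integral_const_mul, ofReal_integral_eq_lintegral_ofReal
            ((hu.1.integrable_abs_rpow hq).const_mul c) (ae_of_all _ fun _ => by positivity)]
      _ ≤ _ := by
          rw [ofReal_gagliardoP_eq_lintegral hu.2]
          exact lintegral_mono fun x =>
            ofReal_le_lintegral_gagliardo_kernel (by omega) hs hp hsp hu.1 hM x
  calc sobolevConst N s p * M ^ (p / q) = c * M := by rw [← hexp]; ring
    _ ≤ _ := (ENNReal.ofReal_le_ofReal_iff hG).mp hlint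

theorem integral_rpow_pStar_rpow_le_gagliardoSemi {N : ℕ} {s p : ℝ} (hN : 2 ≤ N) (hs : 0 < s)
    (hp : 0 < p) (hsp : s * p < N) {u : RN N → ℝ} (hu : DspMem N s p u) :
    (∫ x, |u x| ^ pStar N s p) ^ (1 / pStar N s p) ≤
      (sobolevConst N s p ^ (1 / p))⁻¹ * gagliardoSemi N s p u := by
  have hκ := sobolevConst_pos hN s p
  have hM : 0 ≤ ∫ x, |u x| ^ pStar N s p := integral_nonneg fun x => by positivity
  have hq := pStar_pos hs hp hsp
  calc (∫ x, |u x| ^ pStar N s p) ^ (1 / pStar N s p)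
      = ((∫ x, |u x| ^ pStar N s p) ^ (p / pStar N s p)) ^ (1 / p) := by
        rw [← Real.rpow_mul hM]; congr 1; field_simp
    _ ≤ (gagliardoP N s p u / sobolevConst N s p) ^ (1 / p) := by
        gcongr
        rw [le_div_iff₀ hκ, mul_comm]
        exact sobolevConst_mul_le_gagliardoP hN hs hp hsp hu
    _ = _ := by
        rw [Real.div_rpow (gagliardoP_nonneg N s p u) hκ.le, gagliardoSemi]
        ring

theorem Real.add_rpow_le_two_rpow_mul_rpow_add_rpow {a b p : ℝ} (ha : 0 ≤ a) (hb : 0 ≤ b)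
    (hp : 0 ≤ p) : (a + b) ^ p ≤ 2 ^ p * (a ^ p + b ^ p) :=
  calc (a + b) ^ p ≤ (2 * max a b) ^ p := by
        gcongr; rw [two_mul]; exact add_le_add (le_max_left _ _) (le_max_right _ _)
    _ = 2 ^ p * max a b ^ p := Real.mul_rpow zero_le_two (le_max_of_le_left ha)
    _ ≤ 2 ^ p * (a ^ p + b ^ p) := by
        gcongr
        rcases max_choice a b with h | h <;> rw [h] <;> linarith [Real.rpow_nonneg ha p,
          Real.rpow_nonneg hb p]

theorem weightW_le (N : ℕ) {α : ℝ} (hα : 0 ≤ (N : ℝ) + α) (x : RN N) :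
    weightW N α x ≤ 2 ^ ((N : ℝ) + α) * (1 + ‖x‖) ^ (-((N : ℝ) + α)) := by
  rw [weightW, Real.rpow_neg (by positivity), ← div_eq_mul_inv,
    div_le_div_iff₀ (by positivity) (by positivity), one_mul]
  simpa only [Real.one_rpow] using
    Real.add_rpow_le_two_rpow_mul_rpow_add_rpow zero_le_one (norm_nonneg x) hα

theorem weightW_memLp (N : ℕ) {α r : ℝ} (hr : 0 < r) (hrα : (N : ℝ) < r * (N + α)) :
    MemLp (weightW N α) (ENNReal.ofReal r) volume := by
  have hα : 0 ≤ (N : ℝ) + α := by nlinarith [(N.cast_nonneg : (0 : ℝ) ≤ N)]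
  have hmeas : Continuous fun x : RN N => (1 + ‖x‖) ^ (-((N : ℝ) + α)) :=
    (continuous_const.add continuous_norm).rpow_const
      fun x => Or.inl (by positivity : (0 : ℝ) < 1 + ‖x‖).ne'
  have hbound : MemLp (fun x : RN N => (1 + ‖x‖) ^ (-((N : ℝ) + α)))
      (ENNReal.ofReal r) := by
    refine (integrable_norm_rpow_iff hmeas.aestronglyMeasurable (by positivity)
      ENNReal.ofReal_ne_top).mp ?_
    refine (integrable_one_add_norm (r := r * (N + α))
      (by rwa [finrank_euclideanSpace_fin])).congr (ae_of_all _ fun x => ?_)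
    dsimp only
    rw [ENNReal.toReal_ofReal hr.le, Real.norm_of_nonneg (by positivity),
      ← Real.rpow_mul (by positivity)]
    ring_nf
  refine (hbound.const_mul (2 ^ ((N : ℝ) + α))).of_le
    (Continuous.aestronglyMeasurable ?_) (ae_of_all _ fun x => ?_)
  · exact continuous_const.div (continuous_const.add (continuous_norm.rpow_const
      fun _ => Or.inr hα)) fun _ => by positivity
  · rw [Real.norm_of_nonneg (by unfold weightW; positivity), Real.norm_of_nonneg (by positivity)]
    exact weightW_le N hα x

theorem abs_integral_mul_le {f : ℝ → ℝ} {K A t : ℝ} (hA : 0 ≤ A) (hfK : ∀ τ, |f τ| ≤ K) :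
    |∫ τ in (0 : ℝ)..t, A * f τ| ≤ K * (A * |t|) := by
  have h := intervalIntegral.norm_integral_le_of_norm_le_const (a := 0) (b := t)
    (f := fun τ => A * f τ) (C := A * K) fun τ _ => by
      rw [Real.norm_eq_abs, abs_mul, abs_of_nonneg hA]; gcongr; exact hfK τ
  rw [Real.norm_eq_abs, sub_zero] at h
  linarith

theorem integral_integral_mul_le {α : Type*} [MeasurableSpace α] {μ : Measure α}
    {f : ℝ → ℝ} (hf : Continuous f) {K : ℝ} (hfK : ∀ τ, |f τ| ≤ K) {a g u : α → ℝ}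
    (ha_meas : AEStronglyMeasurable a μ) (ha : ∀ x, 0 ≤ a x ∧ a x ≤ g x) {q q' : ℝ}
    (hqq' : q'.HolderConjugate q) (hg : MemLp g (ENNReal.ofReal q') μ)
    (hu : MemLp u (ENNReal.ofReal q) μ) :
    ∫ x, (∫ τ in (0 : ℝ)..u x, a x * f τ) ∂μ ≤
      K * ((∫ x, g x ^ q' ∂μ) ^ (1 / q') * (∫ x, |u x| ^ q ∂μ) ^ (1 / q)) := by
  have hK : 0 ≤ K := (abs_nonneg _).trans (hfK 0)
  have hg0 : ∀ x, 0 ≤ g x := fun x => (ha x).1.trans (ha x).2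
  have hprimitive : Continuous fun t => ∫ τ in (0 : ℝ)..t, f τ :=
    intervalIntegral.continuous_primitive (fun _ _ => hf.intervalIntegrable _ _) 0
  have hmeas : AEStronglyMeasurable (fun x => ∫ τ in (0 : ℝ)..u x, a x * f τ) μ := by
    simp_rw [intervalIntegral.integral_const_mul]
    exact ha_meas.mul (hprimitive.comp_aestronglyMeasurable hu.aestronglyMeasurable)
  have hgu : Integrable (fun x => g x * |u x|) μ :=
    have := hqq'.ennrealOfReal
    hg.integrable_mul hu.abs
  have hbound : ∀ x, |∫ τ in (0 : ℝ)..u x, a x * f τ| ≤ K * (g x * |u x|) := fun x =>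
    (abs_integral_mul_le (ha x).1 hfK).trans (by gcongr; exact (ha x).2)
  calc ∫ x, (∫ τ in (0 : ℝ)..u x, a x * f τ) ∂μ ≤ ∫ x, K * (g x * |u x|) ∂μ :=
        integral_mono ((hgu.const_mul K).mono' hmeas (ae_of_all _ hbound)) (hgu.const_mul K)
          fun x => (le_abs_self _).trans (hbound x)
    _ = K * ∫ x, g x * |u x| ∂μ := integral_const_mul _ _
    _ ≤ _ := by
        gcongr
        exact integral_mul_le_Lp_mul_Lq_of_nonneg hqq' (ae_of_all _ hg0)
          (ae_of_all _ fun x => abs_nonneg (u x)) hg hu.abs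

theorem continuous_rpow_max_add {ε : ℝ} (hε : 0 < ε) (γ : ℝ) :
    Continuous fun τ : ℝ => (max τ 0 + ε) ^ (-γ) :=
  ((continuous_id.max continuous_const).add continuous_const).rpow_const
    fun τ => Or.inl (add_pos_of_nonneg_of_pos (le_max_right τ 0) hε).ne'

theorem abs_rpow_max_add_le {ε γ : ℝ} (hε : 0 < ε) (hγ : 0 ≤ γ) (τ : ℝ) :
    |(max τ 0 + ε) ^ (-γ)| ≤ ε ^ (-γ) := by
  rw [abs_of_nonneg (by positivity)]
  exact Real.rpow_le_rpow_of_nonpos hε (by linarith [le_max_right τ 0]) (by linarith)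

theorem exists_integral_primitive_le_mul_gagliardoSemi {N : ℕ} {s p : ℝ} (hN : 2 ≤ N)
    (hs : 0 < s) (hp : 1 ≤ p) (hsp : s * p < N) {f : ℝ → ℝ} (hf : Continuous f) {K : ℝ}
    (hfK : ∀ τ, |f τ| ≤ K) {a g : RN N → ℝ} (ha_meas : AEStronglyMeasurable a volume)
    (ha : ∀ x, 0 ≤ a x ∧ a x ≤ g x)
    (hg : MemLp g (ENNReal.ofReal (pStar N s p).conjExponent) volume) :
    ∃ B : ℝ, 0 ≤ B ∧ ∀ u : RN N → ℝ, DspMem N s p u →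
      ∫ x, (∫ τ in (0 : ℝ)..u x, a x * f τ) ≤ B * gagliardoSemi N s p u := by
  set q' := (pStar N s p).conjExponent
  have hqq' : q'.HolderConjugate (pStar N s p) :=
    (Real.HolderConjugate.conjExponent (one_lt_pStar hs hp hsp)).symm
  have hK : 0 ≤ K := (abs_nonneg _).trans (hfK 0)
  have hW : 0 ≤ ∫ x, g x ^ q' :=
    integral_nonneg fun x => Real.rpow_nonneg ((ha x).1.trans (ha x).2) _
  have := sobolevConst_pos hN s p
  refine ⟨K * ((∫ x, g x ^ q') ^ (1 / q') * (sobolevConst N s p ^ (1 / p))⁻¹), by positivity,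
    fun u hu => ?_⟩
  calc _ ≤ K * ((∫ x, g x ^ q') ^ (1 / q') * (∫ x, |u x| ^ pStar N s p) ^ (1 / pStar N s p)) :=
        integral_integral_mul_le hf hfK ha_meas ha hqq' hg hu.1
    _ ≤ K * ((∫ x, g x ^ q') ^ (1 / q') *
          ((sobolevConst N s p ^ (1 / p))⁻¹ * gagliardoSemi N s p u)) := by
        gcongr
        exact integral_rpow_pStar_rpow_le_gagliardoSemi hN hs (by linarith) hsp hu
    _ = _ := by ring

theorem regularized_functional_coercive_general (N : ℕ) (hN : 3 ≤ N) (s p γ α : ℝ)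
    (hs0 : 0 < s) (hp : 2 ≤ p) (hpN : p < (N : ℝ) / s)
    (hγ0 : 0 < γ)
    (hα1 : γ * ((N : ℝ) - s * p) / (p - 1) < α)
    (a : RN N → ℝ) (ha_meas : Measurable a) (c_a : ℝ)
    (ha : ∀ x, 0 ≤ a x ∧ a x ≤ c_a * weightW N α x)
    (n : ℕ) (hn : 0 < n) :
    ∃ c : ℝ, 0 < c ∧ ∃ C : ℝ, 0 ≤ C ∧ ∀ u : RN N → ℝ, DspMem N s p u →
      (1 / p) * gagliardoP N s p u -
          (∫ x : RN N, ∫ τ in (0 : ℝ)..(u x), a x * (max τ 0 + 1 / (n : ℝ)) ^ (-γ)) ≥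
        c * gagliardoP N s p u - C := by
  have hsp : s * p < N := by rwa [lt_div_iff₀ hs0, mul_comm] at hpN
  have hα : 0 < α := (div_pos (mul_pos hγ0 (sub_pos.mpr hsp)) (by linarith)).trans hα1
  have hq' : 1 < (pStar N s p).conjExponent :=
    (Real.HolderConjugate.conjExponent (one_lt_pStar hs0 (by linarith) hsp)).symm.lt
  have hg := (weightW_memLp N (α := α) (r := (pStar N s p).conjExponent) (by linarith)
    (by nlinarith)).const_mul c_a
  obtain ⟨B, hB, hnonlinear⟩ := exists_integral_primitive_le_mul_gagliardoSemi (by omega) hs0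
    (by linarith) hsp (continuous_rpow_max_add (ε := 1 / (n : ℝ)) (by positivity) γ)
    (abs_rpow_max_add_le (by positivity) hγ0.le) ha_meas.aestronglyMeasurable ha hg
  obtain ⟨C, hC, hyoung⟩ := exists_mul_rpow_one_div_le hB (by linarith : 1 < p)
    (by positivity : 0 < 1 / (2 * p))
  refine ⟨1 / (2 * p), by positivity, C, hC, fun u hu => ?_⟩
  have hA := hnonlinear u hu
  have hY := hyoung _ (gagliardoP_nonneg N s p u)
  have hhalf : 1 / p * gagliardoP N s p u = 2 * (1 / (2 * p) * gagliardoP N s p u) := by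
    field_simp
  rw [gagliardoSemi] at hA
  linarith

/-- Coercivity of the regularized energy functional
`J_n(u) = (1/p)[u]_{s,p}^p − ∫ A(x, u(x)) dx`, where
`A(x,t) = ∫_0^t a(x)(τ_+ + 1/n)^{−γ} dτ`:
there are `c > 0` and `C ≥ 0` with `J_n(u) ≥ c [u]_{s,p}^p − C` on `D^{s,p}(ℝ^N)`. -/
theorem regularized_functional_coercive (N : ℕ) (hN : 3 ≤ N) (s p γ α : ℝ)
    (hs0 : 0 < s) (hs1 : s < 1) (hp : 2 ≤ p) (hpN : p < (N : ℝ) / s)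
    (hγ0 : 0 < γ) (hγ1 : γ < 1)
    (hα1 : γ * ((N : ℝ) - s * p) / (p - 1) < α)
    (hα2 : α < γ * ((N : ℝ) - s * p) / (p - 1) + s * p)
    (a : RN N → ℝ) (ha_meas : Measurable a) (c_a : ℝ) (hca : 0 < c_a)
    (ha : ∀ x, 0 ≤ a x ∧ a x ≤ c_a * weightW N α x)
    (n : ℕ) (hn : 0 < n) :
    ∃ c : ℝ, 0 < c ∧ ∃ C : ℝ, 0 ≤ C ∧ ∀ u : RN N → ℝ, DspMem N s p u →
      (1 / p) * gagliardoP N s p u -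
          (∫ x : RN N, ∫ τ in (0 : ℝ)..(u x), a x * (max τ 0 + 1 / (n : ℝ)) ^ (-γ)) ≥
        c * gagliardoP N s p u - C :=
  regularized_functional_coercive_general N hN s p γ α hs0 hp hpN hγ0 hα1 a ha_meas c_a ha n hn
end
end

section
/- Let p ≥ 2 be a real number. For all real numbers a, b one has |a−b|^{p−2}(a−b)(a_+ − b_+) ≥ |a_+ − b_+|^p and −|a−b|^{p−2}(a−b)(a_− − b_−) ≥ |a_− − b_−|^p. -/
/-!
The positive-part map `t ↦ t₊` is monotone and `1`-Lipschitz, so `d := a₊ - b₊` satisfies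
`d² ≤ (a - b) d`, in particular `|d| ≤ |a - b|`. Writing `|d|^p = |d|^(p-2) d²` and using
`p - 2 ≥ 0` gives the first inequality; the second is the first applied to `-a, -b`.
-/

lemma sq_max_zero_sub_le_mul (a b : ℝ) :
    (max a 0 - max b 0) ^ 2 ≤ (a - b) * (max a 0 - max b 0) := by
  rcases le_total a 0 with ha | ha <;> rcases le_total b 0 with hb | hb <;>
    simp only [max_eq_left, max_eq_right, ha, hb] <;> nlinarith

lemma abs_rpow_le_of_sq_le_mul {p : ℝ} (hp : 2 ≤ p) {u v : ℝ} (h : v ^ 2 ≤ u * v) :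
    |v| ^ p ≤ |u| ^ (p - 2) * u * v := by
  have habs : |v| ≤ |u| := by
    have : |v| ^ 2 ≤ |u| * |v| := by
      rw [sq_abs, ← abs_mul]; exact h.trans (le_abs_self _)
    nlinarith [abs_nonneg u, abs_nonneg v]
  have hsplit : |v| ^ p = |v| ^ (p - 2) * v ^ 2 := by
    rw [← sq_abs, ← Real.rpow_two, ← Real.rpow_add' (abs_nonneg v) (by linarith)]
    ring_nf
  calc |v| ^ p = |v| ^ (p - 2) * v ^ 2 := hsplit
    _ ≤ |u| ^ (p - 2) * v ^ 2 := by gcongr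
    _ ≤ |u| ^ (p - 2) * (u * v) := by gcongr
    _ = |u| ^ (p - 2) * u * v := by ring

/-- For `p ≥ 2` and all reals `a, b`:
`|a−b|^{p−2}(a−b)(a_+ − b_+) ≥ |a_+ − b_+|^p` and
`−|a−b|^{p−2}(a−b)(a_− − b_−) ≥ |a_− − b_−|^p`,
where `t_+ = max t 0` and `t_− = max (−t) 0`. -/
theorem odd_power_positive_negative_parts (p : ℝ) (hp : 2 ≤ p) (a b : ℝ) :
    |a - b| ^ (p - 2) * (a - b) * (max a 0 - max b 0) ≥ |max a 0 - max b 0| ^ p ∧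
    -(|a - b| ^ (p - 2) * (a - b) * (max (-a) 0 - max (-b) 0)) ≥
      |max (-a) 0 - max (-b) 0| ^ p := by
  refine ⟨abs_rpow_le_of_sq_le_mul hp (sq_max_zero_sub_le_mul a b), ?_⟩
  have hneg := abs_rpow_le_of_sq_le_mul hp (sq_max_zero_sub_le_mul (-a) (-b))
  rw [show -a - -b = -(a - b) by ring, abs_neg] at hneg
  linarith
end

section
/- Let N ≥ 3, 0 < s < 1, 2 ≤ p < N/s, 0 < γ < 1, and let a satisfy (H_a). Let n ∈ ℕ, and suppose u, v ∈ D^{s,p}(ℝ^N) with u, v ≥ 0 a.e. are weak solutions of the regularized problems (P_n) and (P_{n+1}) respectively, i.e. ⟨(−Δ_p)^s u, φ⟩ = ∫_{ℝ^N} a (u + 1/n)^{−γ} φ dx and ⟨(−Δ_p)^s v, φ⟩ = ∫_{ℝ^N} a (v + 1/(n+1))^{−γ} φ dx for all φ ∈ D^{s,p}(ℝ^N). Then u ≤ v almost everywhere in ℝ^N; in particular the sequence of solutions to (P_n) is monotone non-decreasing in n. -/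
open MeasureTheory Metric

noncomputable section

/-!
Test both weak formulations with `w = (u - v)⁺ ∈ D^{s,p}(ℝ^N)`. Where `w > 0` we have
`u + 1/n > v + 1/(n+1)`, so the singular right-hand sides give
`⟨(−Δ_p)^s u − (−Δ_p)^s v, w⟩ ≤ 0`. Since `t ↦ |t|^{p-2} t` is strictly increasing and
`(u(x) − u(y)) − (v(x) − v(y)) = (u − v)(x) − (u − v)(y)`, the integrand of this pairing is
nonnegative and vanishes only where `w(x) = w(y)`. Hence `w` is a.e. constant, and the only
constant in `L^{p*}(ℝ^N)` is zero.
-/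

open MeasureTheory

lemma Real.add_rpow_le_two_rpow_mul_rpow_add_rpow_s13 {p x y : ℝ} (hp : 0 ≤ p) (hx : 0 ≤ x)
    (hy : 0 ≤ y) : (x + y) ^ p ≤ 2 ^ p * (x ^ p + y ^ p) := by
  have hmax : 0 ≤ max x y := le_max_of_le_left hx
  calc (x + y) ^ p ≤ (2 * max x y) ^ p := by
        gcongr
        rw [two_mul]
        exact add_le_add (le_max_left x y) (le_max_right x y)
    _ = 2 ^ p * max x y ^ p := Real.mul_rpow zero_le_two hmax
    _ ≤ 2 ^ p * (x ^ p + y ^ p) := by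
        gcongr
        rcases max_choice x y with h | h <;> rw [h]
        · exact le_add_of_nonneg_right (Real.rpow_nonneg hy p)
        · exact le_add_of_nonneg_left (Real.rpow_nonneg hx p)

lemma strictMono_abs_rpow_mul_self {q : ℝ} (hq : -1 < q) :
    StrictMono fun t : ℝ => |t| ^ q * t := by
  have hpos : ∀ {t : ℝ}, 0 < t → 0 < |t| ^ q * t := fun ht => by positivity
  have hodd : ∀ t : ℝ, |-t| ^ q * -t = -(|t| ^ q * t) := fun t => by rw [abs_neg]; ring
  have hnonneg : ∀ {a b : ℝ}, 0 ≤ a → a < b → |a| ^ q * a < |b| ^ q * b := by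
    intro a b ha hab
    rcases ha.eq_or_lt with rfl | ha
    · simpa using hpos hab
    rw [abs_of_pos ha, abs_of_pos (ha.trans hab), ← Real.rpow_add_one ha.ne',
      ← Real.rpow_add_one (ha.trans hab).ne']
    exact Real.rpow_lt_rpow ha.le hab (by linarith)
  intro a b hab
  dsimp only
  rcases le_or_gt 0 a with ha | ha
  · exact hnonneg ha hab
  rcases lt_or_ge b 0 with hb | hb
  · have := hnonneg (neg_nonneg.2 hb.le) (neg_lt_neg hab)
    rw [hodd, hodd] at this
    linarith
  · have := hpos (neg_pos.2 ha)
    rw [hodd] at this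
    linarith [mul_nonneg (Real.rpow_nonneg (abs_nonneg b) q) hb]

lemma abs_abs_rpow_sub_two_mul_le (p t : ℝ) : |(|t| ^ (p - 2) * t)| ≤ |t| ^ (p - 1) := by
  rcases eq_or_ne t 0 with rfl | ht
  · simpa using Real.rpow_nonneg le_rfl (p - 1)
  · rw [abs_mul, abs_of_nonneg (Real.rpow_nonneg (abs_nonneg t) _),
      ← Real.rpow_add_one (abs_ne_zero.2 ht), show p - 2 + 1 = p - 1 by ring]

lemma rpow_sub_one_mul_le_rpow_add_rpow {p x y : ℝ} (hp : 1 ≤ p) (hx : 0 ≤ x) (hy : 0 ≤ y) :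
    x ^ (p - 1) * y ≤ x ^ p + y ^ p := by
  have hself : ∀ {t : ℝ}, 0 ≤ t → t ^ (p - 1) * t = t ^ p := fun ht => by
    rw [← Real.rpow_add_one' ht (by linarith), sub_add_cancel]
  rcases le_total y x with h | h
  · calc x ^ (p - 1) * y ≤ x ^ (p - 1) * x := by gcongr
      _ ≤ x ^ p + y ^ p := by rw [hself hx]; linarith [Real.rpow_nonneg hy p]
  · calc x ^ (p - 1) * y ≤ y ^ (p - 1) * y := by gcongr
      _ ≤ x ^ p + y ^ p := by rw [hself hy]; linarith [Real.rpow_nonneg hx p]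

lemma mul_le_add_mul_rpow {q w t M : ℝ} (hq : 1 ≤ q) (hw : 0 ≤ w) (hwM : w ≤ M) (ht : 0 ≤ t) :
    w * t ≤ w + M * t ^ q := by
  rcases le_total t 1 with h | h
  · have := mul_le_mul_of_nonneg_left h hw
    nlinarith [Real.rpow_nonneg ht q]
  · have : t ≤ t ^ q := by simpa using Real.rpow_le_rpow_of_exponent_le h hq
    nlinarith

lemma sub_mul_max_sub_max_nonneg {g : ℝ → ℝ} (hg : Monotone g) {a b c d : ℝ}
    (h : a - b = c - d) : 0 ≤ (g a - g b) * (max c 0 - max d 0) := by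
  rcases le_total a b with hab | hab
  · exact mul_nonneg_of_nonpos_of_nonpos (sub_nonpos.2 (hg hab))
      (sub_nonpos.2 (max_le_max_right 0 (by linarith)))
  · exact mul_nonneg (sub_nonneg.2 (hg hab)) (sub_nonneg.2 (max_le_max_right 0 (by linarith)))

lemma max_eq_max_of_sub_mul_max_sub_max_eq_zero {g : ℝ → ℝ} (hg : StrictMono g) {a b c d : ℝ}
    (h : a - b = c - d) (h0 : (g a - g b) * (max c 0 - max d 0) = 0) : max c 0 = max d 0 := by
  rcases mul_eq_zero.1 h0 with h0 | h0
  · have : c = d := by linarith [hg.injective (sub_eq_zero.1 h0)]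
    rw [this]
  · exact sub_eq_zero.1 h0

lemma mul_rpow_neg_mul_max_sub_le {a x y c c' γ : ℝ} (hγ : 0 ≤ γ) (ha : 0 ≤ a) (hy : 0 ≤ y)
    (hc' : 0 < c') (hcc' : c' ≤ c) :
    a * (x + c) ^ (-γ) * max (x - y) 0 ≤ a * (y + c') ^ (-γ) * max (x - y) 0 := by
  rcases le_total x y with hxy | hxy
  · simp [max_eq_right (sub_nonpos.2 hxy)]
  · have hpow : (x + c) ^ (-γ) ≤ (y + c') ^ (-γ) :=
      Real.rpow_le_rpow_of_nonpos (by positivity) (by linarith) (by linarith)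
    gcongr

namespace MeasureTheory

variable {X : Type*} [MeasurableSpace X] {μ : Measure X}

lemma Integrable.mul_memLp_of_abs_le {W g : X → ℝ} {q M : ℝ} (hq : 1 ≤ q)
    (hW : Integrable W μ) (hWM : ∀ᵐ x ∂μ, |W x| ≤ M) (hg : MemLp g (ENNReal.ofReal q) μ) :
    Integrable (fun x => W x * g x) μ := by
  have hgq : Integrable (fun x => |g x| ^ q) μ := by
    simpa [Real.norm_eq_abs, ENNReal.toReal_ofReal (zero_le_one.trans hq)] using
      hg.integrable_norm_rpow (by simp; linarith) ENNReal.ofReal_ne_top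
  refine (hW.abs.add (hgq.const_mul M)).mono' (hW.1.mul hg.1) ?_
  filter_upwards [hWM] with x hx
  rw [Real.norm_eq_abs, abs_mul]
  exact mul_le_add_mul_rpow hq (abs_nonneg _) hx (abs_nonneg _)

lemma AEStronglyMeasurable.aemeasurable_sub_fst_snd {f : X → ℝ}
    (hf : AEStronglyMeasurable f μ) : AEMeasurable (fun z : X × X => f z.1 - f z.2) (μ.prod μ) :=
  (hf.comp_fst.sub hf.comp_snd).aemeasurable

lemma exists_ae_eq_const_of_ae_prod_eq [SFinite μ] (hμ : μ ≠ 0) {Y : Type*} {f : X → Y}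
    (h : ∀ᵐ z ∂μ.prod μ, f z.1 = f z.2) : ∃ c, f =ᵐ[μ] fun _ => c := by
  have : (ae μ).NeBot := ae_neBot.2 hμ
  obtain ⟨x₀, hx₀⟩ := (Measure.ae_ae_of_ae_prod h).exists
  exact ⟨f x₀, hx₀.mono fun _ hy => hy.symm⟩

lemma ae_eq_zero_of_ae_prod_eq [SFinite μ] (hμ : μ Set.univ = ⊤) {f : X → ℝ} {q : ENNReal}
    (hq0 : q ≠ 0) (hq : q ≠ ⊤) (hf : MemLp f q μ) (h : ∀ᵐ z ∂μ.prod μ, f z.1 = f z.2) :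
    f =ᵐ[μ] 0 := by
  obtain ⟨c, hc⟩ := exists_ae_eq_const_of_ae_prod_eq (by rintro rfl; simp at hμ) h
  obtain rfl : c = 0 := by
    rcases (memLp_const_iff hq0 hq).1 (hf.ae_eq hc) with hc0 | hμ'
    · exact hc0
    · exact absurd hμ hμ'.ne
  exact hc

end MeasureTheory

section FractionalSobolev

variable {N : ℕ} {s p : ℝ}

lemma one_le_pStar (hs : 0 ≤ s) (hp : 1 ≤ p) (hsp : s * p < N) : 1 ≤ pStar N s p := by
  rw [pStar, le_div_iff₀ (by linarith)]
  nlinarith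

lemma weightW_nonneg (α : ℝ) (x : RN N) : 0 ≤ weightW N α x := by
  unfold weightW
  positivity

lemma weightW_le_one (α : ℝ) (x : RN N) : weightW N α x ≤ 1 := by
  unfold weightW
  rw [div_le_one (by positivity)]
  linarith [Real.rpow_nonneg (norm_nonneg x) ((N : ℝ) + α)]

lemma integrable_weightW {α : ℝ} (hα : 0 < α) : Integrable (weightW N α) := by
  set r : ℝ := N + α
  have hr : 0 ≤ r := by positivity
  have hdom : Integrable (fun x : RN N => 2 ^ r * (1 + ‖x‖) ^ (-r)) :=
    (integrable_one_add_norm (by simp [r, hα])).const_mul _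
  have hmeas : Measurable (weightW N α) := by
    unfold weightW
    fun_prop
  refine hdom.mono' hmeas.aestronglyMeasurable (Filter.Eventually.of_forall fun x => ?_)
  have hbound : (1 + ‖x‖) ^ r ≤ 2 ^ r * (1 + ‖x‖ ^ r) := by
    simpa using Real.add_rpow_le_two_rpow_mul_rpow_add_rpow_s13 hr zero_le_one (norm_nonneg x)
  rw [Real.norm_of_nonneg (weightW_nonneg α x), weightW, Real.rpow_neg (by positivity),
    ← div_eq_mul_inv, div_le_div_iff₀ (by positivity) (by positivity), one_mul]
  exact hbound

lemma integrable_mul_rpow_neg_mul {a f φ : RN N → ℝ} {α γ c c_a q : ℝ} (hα : 0 < α)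
    (hγ : 0 ≤ γ) (hc : 0 < c) (hca : 0 ≤ c_a) (ha_meas : Measurable a)
    (ha : ∀ x, 0 ≤ a x ∧ a x ≤ c_a * weightW N α x) (hf : AEMeasurable f volume)
    (hf0 : ∀ᵐ x, 0 ≤ f x) (hq : 1 ≤ q) (hφ : MemLp φ (ENNReal.ofReal q) volume) :
    Integrable (fun x => a x * (f x + c) ^ (-γ) * φ x) := by
  have hbound : ∀ᵐ x, |a x * (f x + c) ^ (-γ)| ≤ c_a * c ^ (-γ) * weightW N α x := by
    filter_upwards [hf0] with x hx
    rw [abs_of_nonneg (mul_nonneg (ha x).1 (Real.rpow_nonneg (by linarith) _))]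
    calc a x * (f x + c) ^ (-γ) ≤ c_a * weightW N α x * c ^ (-γ) :=
          mul_le_mul (ha x).2 (Real.rpow_le_rpow_of_nonpos hc (by linarith) (by linarith))
            (Real.rpow_nonneg (by linarith) _) (mul_nonneg hca (weightW_nonneg α x))
      _ = c_a * c ^ (-γ) * weightW N α x := by ring
  have hmeas : AEStronglyMeasurable (fun x => a x * (f x + c) ^ (-γ)) volume :=
    (ha_meas.aemeasurable.mul (by fun_prop)).aestronglyMeasurable
  have hint := ((integrable_weightW hα).const_mul (c_a * c ^ (-γ))).mono' hmeas hbound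
  refine hint.mul_memLp_of_abs_le (M := c_a * c ^ (-γ)) hq
    (hbound.mono fun x hx => hx.trans ?_) hφ
  exact mul_le_of_le_one_right (by positivity) (weightW_le_one α x)

def fracPairIntegrand (N : ℕ) (s p : ℝ) (u v : RN N → ℝ) (z : RN N × RN N) : ℝ :=
  |u z.1 - u z.2| ^ (p - 2) * (u z.1 - u z.2) * (v z.1 - v z.2) /
    ‖z.1 - z.2‖ ^ ((N : ℝ) + s * p)

lemma fracPair_eq_integral (u v : RN N → ℝ) :
    fracPair N s p u v = ∫ z, fracPairIntegrand N s p u v z :=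
  rfl

lemma aestronglyMeasurable_gagliardo {f : RN N → ℝ} (hf : AEStronglyMeasurable f volume) :
    AEStronglyMeasurable (fun z : RN N × RN N =>
      |f z.1 - f z.2| ^ p / ‖z.1 - z.2‖ ^ ((N : ℝ) + s * p)) volume := by
  have := hf.aemeasurable_sub_fst_snd
  exact AEMeasurable.aestronglyMeasurable (by fun_prop)

lemma aestronglyMeasurable_fracPairIntegrand {u v : RN N → ℝ}
    (hu : AEStronglyMeasurable u volume) (hv : AEStronglyMeasurable v volume) :
    AEStronglyMeasurable (fracPairIntegrand N s p u v) volume := by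
  have := hu.aemeasurable_sub_fst_snd
  have := hv.aemeasurable_sub_fst_snd
  exact AEMeasurable.aestronglyMeasurable (by unfold fracPairIntegrand; fun_prop)

lemma abs_fracPairIntegrand_le (hp : 1 ≤ p) (u v : RN N → ℝ) (z : RN N × RN N) :
    |fracPairIntegrand N s p u v z| ≤
      |u z.1 - u z.2| ^ p / ‖z.1 - z.2‖ ^ ((N : ℝ) + s * p) +
        |v z.1 - v z.2| ^ p / ‖z.1 - z.2‖ ^ ((N : ℝ) + s * p) := by
  rw [fracPairIntegrand, abs_div, abs_of_nonneg (Real.rpow_nonneg (norm_nonneg _) _), abs_mul,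
    ← add_div]
  gcongr
  calc |(|u z.1 - u z.2| ^ (p - 2) * (u z.1 - u z.2))| * |v z.1 - v z.2|
      ≤ |u z.1 - u z.2| ^ (p - 1) * |v z.1 - v z.2| := by
        gcongr
        exact abs_abs_rpow_sub_two_mul_le p _
    _ ≤ _ := rpow_sub_one_mul_le_rpow_add_rpow hp (abs_nonneg _) (abs_nonneg _)

lemma gagliardo_max_sub_le (hp : 0 ≤ p) (u v : RN N → ℝ) (z : RN N × RN N) :
    |max (u z.1 - v z.1) 0 - max (u z.2 - v z.2) 0| ^ p / ‖z.1 - z.2‖ ^ ((N : ℝ) + s * p) ≤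
      2 ^ p * (|u z.1 - u z.2| ^ p / ‖z.1 - z.2‖ ^ ((N : ℝ) + s * p) +
        |v z.1 - v z.2| ^ p / ‖z.1 - z.2‖ ^ ((N : ℝ) + s * p)) := by
  rw [← add_div, ← mul_div_assoc]
  gcongr
  calc |max (u z.1 - v z.1) 0 - max (u z.2 - v z.2) 0| ^ p
      ≤ (|u z.1 - u z.2| + |v z.1 - v z.2|) ^ p := by
        gcongr
        calc _ ≤ |(u z.1 - v z.1) - (u z.2 - v z.2)| := abs_max_sub_max_le_abs _ _ _
          _ = |(u z.1 - u z.2) - (v z.1 - v z.2)| := by ring_nf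
          _ ≤ _ := abs_sub _ _
    _ ≤ _ := Real.add_rpow_le_two_rpow_mul_rpow_add_rpow_s13 hp (abs_nonneg _) (abs_nonneg _)

lemma fracPairIntegrand_sub_fracPairIntegrand (u v w : RN N → ℝ) (z : RN N × RN N) :
    fracPairIntegrand N s p u w z - fracPairIntegrand N s p v w z =
      (|u z.1 - u z.2| ^ (p - 2) * (u z.1 - u z.2) -
          |v z.1 - v z.2| ^ (p - 2) * (v z.1 - v z.2)) *
        (w z.1 - w z.2) / ‖z.1 - z.2‖ ^ ((N : ℝ) + s * p) := by
  unfold fracPairIntegrand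
  ring

lemma fracPairIntegrand_max_sub_nonneg (hp : 1 < p) (u v : RN N → ℝ) (z : RN N × RN N) :
    0 ≤ fracPairIntegrand N s p u (fun x => max (u x - v x) 0) z -
      fracPairIntegrand N s p v (fun x => max (u x - v x) 0) z := by
  rw [fracPairIntegrand_sub_fracPairIntegrand]
  have hmono := (strictMono_abs_rpow_mul_self (q := p - 2) (by linarith)).monotone
  exact div_nonneg (sub_mul_max_sub_max_nonneg hmono (by ring))
    (Real.rpow_nonneg (norm_nonneg _) _)

lemma max_sub_eq_of_fracPairIntegrand_eq (hp : 1 < p) {u v : RN N → ℝ} {z : RN N × RN N}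
    (h : fracPairIntegrand N s p u (fun x => max (u x - v x) 0) z =
      fracPairIntegrand N s p v (fun x => max (u x - v x) 0) z) :
    max (u z.1 - v z.1) 0 = max (u z.2 - v z.2) 0 := by
  rcases eq_or_ne z.1 z.2 with hz | hz
  · rw [hz]
  rw [← sub_eq_zero, fracPairIntegrand_sub_fracPairIntegrand, div_eq_zero_iff,
    or_iff_left (Real.rpow_pos_of_pos (norm_pos_iff.2 (sub_ne_zero.2 hz)) _).ne'] at h
  exact max_eq_max_of_sub_mul_max_sub_max_eq_zero (strictMono_abs_rpow_mul_self (by linarith))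
    (by ring) h

namespace DspMem

variable {u v : RN N → ℝ}

lemma max_sub_zero (hp : 0 ≤ p) (hu : DspMem N s p u) (hv : DspMem N s p v) :
    DspMem N s p fun x => max (u x - v x) 0 := by
  have hw : MemLp (fun x => max (u x - v x) 0) (ENNReal.ofReal (pStar N s p)) volume :=
    (hu.1.sub hv.1).pos_part
  have hdom := (hu.2.add hv.2).const_mul (2 ^ p)
  have hmeas := aestronglyMeasurable_gagliardo (s := s) (p := p) hw.1
  refine ⟨hw, hdom.mono' hmeas (Filter.Eventually.of_forall fun z => ?_)⟩
  rw [Real.norm_of_nonneg (div_nonneg (Real.rpow_nonneg (abs_nonneg _) _)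
    (Real.rpow_nonneg (norm_nonneg _) _))]
  exact gagliardo_max_sub_le hp u v z

lemma integrable_fracPairIntegrand (hp : 1 ≤ p) (hu : DspMem N s p u) (hv : DspMem N s p v) :
    Integrable (fracPairIntegrand N s p u v) :=
  (hu.2.add hv.2).mono' (aestronglyMeasurable_fracPairIntegrand hu.1.1 hv.1.1)
    (Filter.Eventually.of_forall (abs_fracPairIntegrand_le hp u v))

theorem ae_le_of_fracPair_max_sub_le (hs : 0 ≤ s) (hp : 1 < p) (hsp : s * p < N)
    (hu : DspMem N s p u) (hv : DspMem N s p v)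
    (h : fracPair N s p u (fun x => max (u x - v x) 0) ≤
      fracPair N s p v (fun x => max (u x - v x) 0)) :
    ∀ᵐ x, u x ≤ v x := by
  set w : RN N → ℝ := fun x => max (u x - v x) 0
  have hw : DspMem N s p w := hu.max_sub_zero (by linarith) hv
  have hIu := hu.integrable_fracPairIntegrand hp.le hw
  have hIv := hv.integrable_fracPairIntegrand hp.le hw
  set D := fun z => fracPairIntegrand N s p u w z - fracPairIntegrand N s p v w z
  have hD : 0 ≤ D := fracPairIntegrand_max_sub_nonneg hp u v
  have hD0 : D =ᵐ[volume] 0 := by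
    refine (integral_eq_zero_iff_of_nonneg hD (hIu.sub hIv)).1
      (le_antisymm ?_ (integral_nonneg hD))
    rw [integral_sub hIu hIv, ← fracPair_eq_integral, ← fracPair_eq_integral]
    linarith
  have hconst : ∀ᵐ z ∂volume.prod volume, w z.1 = w z.2 :=
    hD0.mono fun z hz => max_sub_eq_of_fracPairIntegrand_eq hp (sub_eq_zero.1 hz)
  have hN : 0 < N := by exact_mod_cast (mul_nonneg hs (by linarith)).trans_lt hsp
  have : Nonempty (Fin N) := ⟨⟨0, hN⟩⟩
  have hq0 : ENNReal.ofReal (pStar N s p) ≠ 0 := by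
    simp [zero_lt_one.trans_le (one_le_pStar hs hp.le hsp)]
  have hw0 : w =ᵐ[volume] 0 := ae_eq_zero_of_ae_prod_eq
    (measure_univ_of_isAddLeftInvariant volume) hq0 ENNReal.ofReal_ne_top hw.1 hconst
  filter_upwards [hw0] with x hx
  have : u x - v x ≤ w x := le_max_left _ _
  rw [hx] at this
  exact sub_nonpos.1 this

end DspMem

end FractionalSobolev

theorem regularized_solutions_monotone_general (N : ℕ) (s p γ α : ℝ)
    (hs0 : 0 < s) (hp : 2 ≤ p) (hpN : p < (N : ℝ) / s)
    (hγ0 : 0 < γ)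
    (hα1 : γ * ((N : ℝ) - s * p) / (p - 1) < α)
    (a : RN N → ℝ) (ha_meas : Measurable a) (c_a : ℝ) (hca : 0 < c_a)
    (ha : ∀ x, 0 ≤ a x ∧ a x ≤ c_a * weightW N α x)
    (n : ℕ) (hn : 0 < n) (u v : RN N → ℝ)
    (hu : DspMem N s p u) (hv : DspMem N s p v)
    (hu0 : ∀ᵐ x ∂(volume : Measure (RN N)), 0 ≤ u x)
    (hv0 : ∀ᵐ x ∂(volume : Measure (RN N)), 0 ≤ v x)
    (husol : ∀ φ : RN N → ℝ, DspMem N s p φ →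
      fracPair N s p u φ = ∫ x : RN N, a x * (u x + 1 / (n : ℝ)) ^ (-γ) * φ x)
    (hvsol : ∀ φ : RN N → ℝ, DspMem N s p φ →
      fracPair N s p v φ = ∫ x : RN N, a x * (v x + 1 / ((n : ℝ) + 1)) ^ (-γ) * φ x) :
    ∀ᵐ x ∂(volume : Measure (RN N)), u x ≤ v x := by
  have hp1 : 1 < p := by linarith
  have hsp : s * p < N := by rwa [lt_div_iff₀ hs0, mul_comm] at hpN
  have hq := one_le_pStar hs0.le hp1.le hsp
  have hα : 0 < α := (div_pos (mul_pos hγ0 (by linarith)) (by linarith)).trans hα1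
  have hn' : (0 : ℝ) < n := by exact_mod_cast hn
  have hw := hu.max_sub_zero (by linarith) hv
  refine hu.ae_le_of_fracPair_max_sub_le hs0.le hp1 hsp hv ?_
  rw [husol _ hw, hvsol _ hw]
  refine integral_mono_ae
    (integrable_mul_rpow_neg_mul hα hγ0.le (by positivity) hca.le ha_meas ha
      hu.1.1.aemeasurable hu0 hq hw.1)
    (integrable_mul_rpow_neg_mul hα hγ0.le (by positivity) hca.le ha_meas ha
      hv.1.1.aemeasurable hv0 hq hw.1) ?_
  filter_upwards [hv0] with x hx
  exact mul_rpow_neg_mul_max_sub_le hγ0.le (ha x).1 hx (by positivity)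
    (one_div_le_one_div_of_le hn' (by linarith))

/-- Monotonicity of the sequence of solutions to the regularized problems: if `u`
solves `(P_n)` and `v` solves `(P_{n+1})`, then `u ≤ v` a.e. in `ℝ^N`. -/
theorem regularized_solutions_monotone (N : ℕ) (hN : 3 ≤ N) (s p γ α : ℝ)
    (hs0 : 0 < s) (hs1 : s < 1) (hp : 2 ≤ p) (hpN : p < (N : ℝ) / s)
    (hγ0 : 0 < γ) (hγ1 : γ < 1)
    (hα1 : γ * ((N : ℝ) - s * p) / (p - 1) < α)
    (hα2 : α < γ * ((N : ℝ) - s * p) / (p - 1) + s * p)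
    (a : RN N → ℝ) (ha_meas : Measurable a) (c_a : ℝ) (hca : 0 < c_a)
    (ha : ∀ x, 0 ≤ a x ∧ a x ≤ c_a * weightW N α x)
    (n : ℕ) (hn : 0 < n) (u v : RN N → ℝ)
    (hu : DspMem N s p u) (hv : DspMem N s p v)
    (hu0 : ∀ᵐ x ∂(volume : Measure (RN N)), 0 ≤ u x)
    (hv0 : ∀ᵐ x ∂(volume : Measure (RN N)), 0 ≤ v x)
    (husol : ∀ φ : RN N → ℝ, DspMem N s p φ →
      fracPair N s p u φ = ∫ x : RN N, a x * (u x + 1 / (n : ℝ)) ^ (-γ) * φ x)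
    (hvsol : ∀ φ : RN N → ℝ, DspMem N s p φ →
      fracPair N s p v φ = ∫ x : RN N, a x * (v x + 1 / ((n : ℝ) + 1)) ^ (-γ) * φ x) :
    ∀ᵐ x ∂(volume : Measure (RN N)), u x ≤ v x :=
  regularized_solutions_monotone_general N s p γ α hs0 hp hpN hγ0 hα1 a ha_meas c_a hca ha n hn u v
    hu hv hu0 hv0 husol hvsol
end
end
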